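/- Let n₁, n₂ be positive integers with n := n₁ + n₂ < m ≤ N. Let Φ ∈ ℝ^{N×m} with ΦᵀΦ = I_m, and let S = [S₁ S₂] ∈ ℝ^{N×n} have orthonormal columns (SᵀS = I_n), where S₁ ∈ ℝ^{N×n₁} and S₂ ∈ ℝ^{N×n₂}. Set M₁ := S₁ᵀΦ and M := SᵀΦ, and assume M₁M₁ᵀ and MMᵀ are both invertible; let M₁⁺ := M₁ᵀ(M₁M₁ᵀ)⁻¹ and M⁺ := Mᵀ(MMᵀ)⁻¹. Fix u ∈ ℝ^N and let y₁ := S₁ᵀu, y₂ := S₂ᵀu, y := Sᵀu. Suppose z* ∈ ℝ^m satisfies M₁z* = 0, z* minimizes z ↦ ‖S₂ᵀΦ(M₁⁺y₁ + z) − y₂‖² over {z ∈ ℝ^m : M₁z = 0}, and ‖z*‖ ≤ ‖z‖ for every minimizer z of this problem (i.e., z* is the minimum-norm minimizer). Then the two-stage S-DEIM reconstruction coincides with the vanilla DEIM reconstruction using all n sensors: Φ(M₁⁺y₁ + z*) = ΦM⁺y. -/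

import Mathlib

open Matrix

/-- A matrix acting on Euclidean space. -/
noncomputable def aV {ι κ : Type} [Fintype κ] [DecidableEq κ]
    (A : Matrix ι κ ℝ) (x : EuclideanSpace ℝ κ) : EuclideanSpace ℝ ι :=
  Matrix.toEuclideanLin A x

lemma aV_mulVec {ι κ : Type} [Fintype κ] [DecidableEq κ]
    (A : Matrix ι κ ℝ) (x : EuclideanSpace ℝ κ) : aV A x = A.mulVec x := rfl

lemma inner_eq_zero_of_rowspace {ι : Type} [Fintype ι] [DecidableEq ι] {m : ℕ}
    (A : Matrix ι (Fin m) ℝ)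
    (d w : EuclideanSpace ℝ (Fin m)) (c : EuclideanSpace ℝ ι)
    (hw : w = Aᵀ *ᵥ c) (hd : A *ᵥ d = 0) : (inner ℝ d w : ℝ) = 0 := by
  have h1 : (inner ℝ d w : ℝ) = d ⬝ᵥ (w : Fin m → ℝ) := by
    simp [PiLp.inner_apply, RCLike.inner_apply, dotProduct, mul_comm]
  rw [h1, hw, dotProduct_mulVec, vecMul_transpose, hd, zero_dotProduct]

/-- Equivalence of vanilla DEIM and two-stage S-DEIM (Theorem 3.13): withholding the second
batch of `n₂` measurements, reconstructing with the first `n₁` sensors via S-DEIM, and then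
choosing the kernel vector `z*` as the minimum-norm minimizer of the misfit on the withheld
measurements, recovers exactly the vanilla DEIM reconstruction `ΦM⁺y` using all
`n = n₁ + n₂` sensors at once. -/
theorem two_stage_SDEIM_equals_vanilla_DEIM (N m n₁ n₂ : ℕ)
    (hn₁ : 0 < n₁) (hn₂ : 0 < n₂) (hnm : n₁ + n₂ < m) (hmN : m ≤ N)
    (Φ : Matrix (Fin N) (Fin m) ℝ) (hΦ : Φᵀ * Φ = 1)
    (S₁ : Matrix (Fin N) (Fin n₁) ℝ) (S₂ : Matrix (Fin N) (Fin n₂) ℝ)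
    (S : Matrix (Fin N) (Fin n₁ ⊕ Fin n₂) ℝ) (hSdef : S = Matrix.fromCols S₁ S₂)
    (hS : Sᵀ * S = 1)
    (M₁ : Matrix (Fin n₁) (Fin m) ℝ) (hM₁ : M₁ = S₁ᵀ * Φ)
    (M : Matrix (Fin n₁ ⊕ Fin n₂) (Fin m) ℝ) (hM : M = Sᵀ * Φ)
    (hM₁M₁ : IsUnit (M₁ * M₁ᵀ)) (hMM : IsUnit (M * Mᵀ))
    (M₁plus : Matrix (Fin m) (Fin n₁) ℝ) (hM₁p : M₁plus = M₁ᵀ * (M₁ * M₁ᵀ)⁻¹)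
    (Mplus : Matrix (Fin m) (Fin n₁ ⊕ Fin n₂) ℝ) (hMp : Mplus = Mᵀ * (M * Mᵀ)⁻¹)
    (u : EuclideanSpace ℝ (Fin N))
    (y₁ : EuclideanSpace ℝ (Fin n₁)) (hy₁ : y₁ = aV S₁ᵀ u)
    (y₂ : EuclideanSpace ℝ (Fin n₂)) (hy₂ : y₂ = aV S₂ᵀ u)
    (y : EuclideanSpace ℝ (Fin n₁ ⊕ Fin n₂)) (hy : y = aV Sᵀ u)
    (zstar : EuclideanSpace ℝ (Fin m))
    (hker : aV M₁ zstar = 0)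
    (hmin : ∀ z : EuclideanSpace ℝ (Fin m), aV M₁ z = 0 →
      ‖aV (S₂ᵀ * Φ) (aV M₁plus y₁ + zstar) - y₂‖ ^ 2 ≤
        ‖aV (S₂ᵀ * Φ) (aV M₁plus y₁ + z) - y₂‖ ^ 2)
    (hminnorm : ∀ z : EuclideanSpace ℝ (Fin m), aV M₁ z = 0 →
      (∀ z' : EuclideanSpace ℝ (Fin m), aV M₁ z' = 0 →
        ‖aV (S₂ᵀ * Φ) (aV M₁plus y₁ + z) - y₂‖ ^ 2 ≤
          ‖aV (S₂ᵀ * Φ) (aV M₁plus y₁ + z') - y₂‖ ^ 2) →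
      ‖zstar‖ ≤ ‖z‖) :
    aV Φ (aV M₁plus y₁ + zstar) = aV (Φ * Mplus) y := by
  -- abbreviations
  set M₂ : Matrix (Fin n₂) (Fin m) ℝ := S₂ᵀ * Φ with hM₂
  -- block decompositions
  have hMfr : M = fromRows M₁ M₂ := by
    rw [hM, hSdef, transpose_fromCols, fromRows_mul, hM₁, hM₂]
  have hy' : y = Sum.elim y₁ y₂ := by
    rw [hy, hy₁, hy₂, aV_mulVec, aV_mulVec, aV_mulVec, hSdef, transpose_fromCols,
      fromRows_mulVec]
  -- pseudoinverse identities
  have hMMi : M * Mplus = 1 := by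
    rw [hMp, ← Matrix.mul_assoc]
    exact Matrix.mul_nonsing_inv _ ((Matrix.isUnit_iff_isUnit_det _).mp hMM)
  have hM₁i : M₁ * M₁plus = 1 := by
    rw [hM₁p, ← Matrix.mul_assoc]
    exact Matrix.mul_nonsing_inv _ ((Matrix.isUnit_iff_isUnit_det _).mp hM₁M₁)
  have hMw : M *ᵥ (Mplus *ᵥ y) = y := by rw [mulVec_mulVec, hMMi, one_mulVec]
  have hM₁w : M₁ *ᵥ (M₁plus *ᵥ y₁) = y₁ := by rw [mulVec_mulVec, hM₁i, one_mulVec]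
  -- components of M *ᵥ (Mplus *ᵥ y)
  have hM₁Mp : M₁ *ᵥ (Mplus *ᵥ y) = y₁ := by
    funext i
    have h := congrFun hMw (Sum.inl i)
    rw [hMfr, fromRows_mulVec] at h
    simpa [hy'] using h
  have hM₂Mp : M₂ *ᵥ (Mplus *ᵥ y) = y₂ := by
    funext i
    have h := congrFun hMw (Sum.inr i)
    rw [hMfr, fromRows_mulVec] at h
    simpa [hy'] using h
  -- the candidate kernel vector w
  set w : EuclideanSpace ℝ (Fin m) := aV Mplus y - aV M₁plus y₁ with hw
  have hkey : aV M₁plus y₁ + w = aV Mplus y := by rw [hw]; abel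
  have hkerw : aV M₁ w = 0 := by
    apply WithLp.ofLp_injective 2
    show M₁ *ᵥ ((Mplus *ᵥ y) - (M₁plus *ᵥ y₁)) = 0
    rw [mulVec_sub, hM₁Mp, hM₁w, sub_self]
  -- w has zero misfit
  have hmisw : aV M₂ (aV M₁plus y₁ + w) - y₂ = 0 := by
    rw [hkey]
    exact sub_eq_zero.mpr (WithLp.ofLp_injective 2 hM₂Mp)
  have hminw : ∀ z' : EuclideanSpace ℝ (Fin m), aV M₁ z' = 0 →
      ‖aV M₂ (aV M₁plus y₁ + w) - y₂‖ ^ 2 ≤ ‖aV M₂ (aV M₁plus y₁ + z') - y₂‖ ^ 2 := by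
    intro z' _
    rw [hmisw]
    simpa using sq_nonneg ‖aV M₂ (aV M₁plus y₁ + z') - y₂‖
  -- zstar's misfit is also zero
  have hmisz : aV M₂ (aV M₁plus y₁ + zstar) - y₂ = 0 := by
    have h0 : ‖aV M₂ (aV M₁plus y₁ + zstar) - y₂‖ ^ 2 ≤ 0 := by
      have := hmin w hkerw
      rwa [hmisw, norm_zero, zero_pow two_ne_zero] at this
    have h1 : ‖aV M₂ (aV M₁plus y₁ + zstar) - y₂‖ = 0 :=
      pow_eq_zero_iff two_ne_zero |>.mp (le_antisymm h0 (sq_nonneg _))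
    exact norm_eq_zero.mp h1
  -- hence M *ᵥ (zstar - w) = 0
  have hM₂zw : M₂ *ᵥ zstar = M₂ *ᵥ w := by
    have h := sub_eq_zero.mp hmisz
    have h' := sub_eq_zero.mp hmisw
    have : aV M₂ (aV M₁plus y₁ + zstar) = aV M₂ (aV M₁plus y₁ + w) := h.trans h'.symm
    replace this := congrArg WithLp.ofLp this
    rw [aV_mulVec, aV_mulVec] at this
    have h2 : M₂ *ᵥ (aV M₁plus y₁ + zstar) = M₂ *ᵥ (aV M₁plus y₁ + w) := this
    rw [mulVec_add, mulVec_add] at h2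
    exact add_left_cancel h2
  have hMd : M *ᵥ (zstar - w) = 0 := by
    rw [mulVec_sub]
    funext i
    cases i with
    | inl i =>
      have h1 := congrFun (show M₁ *ᵥ zstar = M₁ *ᵥ w from (congrArg WithLp.ofLp hker : M₁ *ᵥ zstar = 0).trans
        (congrArg WithLp.ofLp hkerw : M₁ *ᵥ w = 0).symm) i
      rw [hMfr, fromRows_mulVec, fromRows_mulVec]
      simpa using sub_eq_zero.mpr h1
    | inr i =>
      have h1 := congrFun hM₂zw i
      rw [hMfr, fromRows_mulVec, fromRows_mulVec]
      simpa using sub_eq_zero.mpr h1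
  -- w lies in the row space of M
  have hrow : (w : Fin m → ℝ) = Mᵀ *ᵥ (((M * Mᵀ)⁻¹ *ᵥ y) - Sum.elim ((M₁ * M₁ᵀ)⁻¹ *ᵥ y₁) 0) := by
    show (Mplus *ᵥ y) - (M₁plus *ᵥ y₁) = _
    rw [mulVec_sub, hMp, hM₁p, ← mulVec_mulVec, ← mulVec_mulVec]
    congr 1
    have : Mᵀ = fromCols M₁ᵀ M₂ᵀ := by rw [hMfr, transpose_fromRows]
    rw [this, fromCols_mulVec_sumElim, mulVec_zero, add_zero]
  -- orthogonality and Pythagoras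
  have horth : (inner ℝ (zstar - w) w : ℝ) = 0 :=
    inner_eq_zero_of_rowspace M (zstar - w) w _ hrow hMd
  have hpyth : ‖zstar‖ ^ 2 = ‖w‖ ^ 2 + ‖zstar - w‖ ^ 2 := by
    have h := norm_add_sq_real w (zstar - w)
    rw [real_inner_comm, horth, show w + (zstar - w) = zstar from by abel] at h
    linarith
  have hle : ‖zstar‖ ≤ ‖w‖ := hminnorm w hkerw hminw
  have hzw : zstar = w := by
    have h2 : ‖zstar‖ ^ 2 ≤ ‖w‖ ^ 2 := by
      exact pow_le_pow_left₀ (norm_nonneg _) hle 2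
    have h3 : ‖zstar - w‖ ^ 2 ≤ 0 := by linarith [hpyth]
    have h4 : ‖zstar - w‖ = 0 :=
      pow_eq_zero_iff two_ne_zero |>.mp (le_antisymm h3 (sq_nonneg _))
    exact sub_eq_zero.mp (norm_eq_zero.mp h4)
  rw [hzw, hkey]
  apply WithLp.ofLp_injective 2
  show Φ *ᵥ (Mplus *ᵥ y) = (Φ * Mplus) *ᵥ y
  rw [mulVec_mulVec]
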